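/- Let H be a finite simple 3-connected graph and let 𝒯 be a tangle of order at least 4 in H. Then the elements of 𝒟(H,𝒯) are pairwise disjoint, no edge of H joins two distinct elements of 𝒟(H,𝒯), and for every D ∈ 𝒟(H,𝒯) the pair (N[D], V(H) ∖ D) is a separation of H of order exactly 3. -/
import Mathlib


/-- A separation of a graph `G`: a pair of vertex sets `(A, B)` with `A ∪ B = V(G)` such
that no edge of `G` has one endpoint in `A \ B` and the other in `B \ A`. -/
def IsSeparation {V : Type*} (G : SimpleGraph V) (A B : Set V) : Prop :=
  A ∪ B = Set.univ ∧ ∀ ⦃u v : V⦄, G.Adj u v → u ∈ A \ B → v ∉ B \ A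

/-- A tangle of order `k` in the graph `G`. -/
def IsTangle {V : Type*} (G : SimpleGraph V) (k : ℕ) (T : Set (Set V × Set V)) : Prop :=
  (∀ p ∈ T, IsSeparation G p.1 p.2 ∧ (p.1 ∩ p.2).ncard < k) ∧
  (∀ A B : Set V, IsSeparation G A B → (A ∩ B).ncard < k → (A, B) ∈ T ∨ (B, A) ∈ T) ∧
  (∀ p₁ ∈ T, ∀ p₂ ∈ T, ∀ p₃ ∈ T,
    p₁.1 ∪ p₂.1 ∪ p₃.1 ≠ (Set.univ : Set V))

/-- `G` is 3-connected: it has at least 4 vertices and deleting any set of at most 2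
vertices leaves it connected. -/
def ThreeConnected {V : Type*} (G : SimpleGraph V) : Prop :=
  4 ≤ Nat.card V ∧ ∀ S : Set V, S.ncard ≤ 2 → (G.induce Sᶜ).Connected

/-- The open neighborhood `N(D)` of a vertex set `D`: vertices outside `D` with a
neighbor in `D`. -/
def setNbhd {V : Type*} (G : SimpleGraph V) (D : Set V) : Set V :=
  {v | v ∉ D ∧ ∃ u ∈ D, G.Adj u v}

/-- A `T`-predongle: a set `D` with `|N(D)| ≤ 3` and `(N[D], V(G) ∖ D) ∈ T`. -/
def IsPredongle {V : Type*} (G : SimpleGraph V) (T : Set (Set V × Set V)) (D : Set V) :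
    Prop :=
  (setNbhd G D).ncard ≤ 3 ∧ (D ∪ setNbhd G D, Dᶜ) ∈ T

/-- A maximal `T`-predongle: inclusion-wise maximal among `T`-predongles. -/
def IsMaxPredongle {V : Type*} (G : SimpleGraph V) (T : Set (Set V × Set V)) (D : Set V) :
    Prop :=
  IsPredongle G T D ∧ ∀ D' : Set V, IsPredongle G T D' → D ⊆ D' → D = D'

/-- The family `𝒟₀(H,T)` of all maximal `T`-predongles. -/
def MaxPredongles {V : Type*} (G : SimpleGraph V) (T : Set (Set V × Set V)) :
    Set (Set V) :=
  {D | IsMaxPredongle G T D}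

/-- The family `𝒟(H,T)`: each maximal predongle `D` shrunk by removing the closed
neighborhoods of all other maximal predongles, with the empty set discarded. -/
def PredongleFamily {V : Type*} (G : SimpleGraph V) (T : Set (Set V × Set V)) :
    Set (Set V) :=
  {E | E ≠ ∅ ∧ ∃ D ∈ MaxPredongles G T,
    E = D \ ⋃ D' ∈ MaxPredongles G T \ {D}, (D' ∪ setNbhd G D')}


section Aux
variable {V : Type*} [Fintype V] {H : SimpleGraph V} {k : ℕ} {T : Set (Set V × Set V)}

lemma sep_symm {A B : Set V} (h : IsSeparation H A B) : IsSeparation H B A := by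
  refine ⟨by rw [Set.union_comm]; exact h.1, fun u v hadj hu hv => ?_⟩
  exact h.2 hadj.symm hv hu

lemma sep_nbhd (D : Set V) : IsSeparation H (D ∪ setNbhd H D) Dᶜ := by
  constructor
  · ext x; simp only [Set.mem_union, Set.mem_compl_iff, Set.mem_univ, iff_true]
    tauto
  · rintro u v hadj hu hv
    rcases hu with ⟨hu1, hu2⟩
    simp only [Set.mem_compl_iff, not_not] at hu2
    rcases hv with ⟨hv1, hv2⟩
    exact hv2 (Or.inr ⟨hv1, u, hu2, hadj⟩)

lemma nbhd_inter (D : Set V) : (D ∪ setNbhd H D) ∩ Dᶜ = setNbhd H D := by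
  ext x
  simp only [Set.mem_inter_iff, Set.mem_union, Set.mem_compl_iff, setNbhd, Set.mem_setOf_eq]
  tauto

lemma fst_ne_univ (hT : IsTangle H k T) {A B : Set V} (h : (A, B) ∈ T) : A ≠ Set.univ := by
  intro hA
  exact hT.2.2 _ h _ h _ h (by simp [hA])

lemma T_orient (hT : IsTangle H k T) {P Q : Set V} (hsep : IsSeparation H P Q)
    (hord : (P ∩ Q).ncard < k) {p₁ p₂ : Set V × Set V} (h₁ : p₁ ∈ T) (h₂ : p₂ ∈ T)
    (hcov : Q ∪ p₁.1 ∪ p₂.1 = Set.univ) : (P, Q) ∈ T := by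
  rcases hT.2.1 P Q hsep hord with h | h
  · exact h
  · exact absurd hcov (hT.2.2 _ h _ h₁ _ h₂)

lemma three_conn_cut (hH : ThreeConnected H) {A B : Set V} (hsep : IsSeparation H A B)
    (ha : (A \ B).Nonempty) (hb : (B \ A).Nonempty) : 3 ≤ (A ∩ B).ncard := by
  by_contra hlt
  push_neg at hlt
  have hconn := hH.2 (A ∩ B) (by omega)
  obtain ⟨a, ha1, ha2⟩ := ha
  obtain ⟨b, hb1, hb2⟩ := hb
  have hac : a ∈ (A ∩ B)ᶜ := fun h => ha2 h.2
  have hbc : b ∈ (A ∩ B)ᶜ := fun h => hb2 h.1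
  have hr := hconn.preconnected ⟨a, hac⟩ ⟨b, hbc⟩
  have key : ∀ {x y : ↥(A ∩ B)ᶜ} (_ : (H.induce (A ∩ B)ᶜ).Walk x y),
      (x : V) ∈ A \ B → (y : V) ∈ A \ B := by
    intro x y w
    induction w with
    | nil => exact id
    | @cons u z y hadj w ih =>
      intro hu
      apply ih
      have hz := hsep.2 hadj hu
      have hzu : (z : V) ∈ A ∪ B := by rw [hsep.1]; trivial
      have hznot : (z : V) ∉ A ∩ B := z.2
      rcases hzu with h | h
      · exact ⟨h, fun hB => hznot ⟨h, hB⟩⟩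
      · exact absurd ⟨h, fun hA => hznot ⟨hA, h⟩⟩ hz
  obtain ⟨w⟩ := hr
  exact hb2 (key w ⟨ha1, ha2⟩).1

end Aux
section Pair
variable {V : Type*} [Fintype V] {H : SimpleGraph V} {k : ℕ} {T : Set (Set V × Set V)}

lemma counting (M₁ M₂ : Set V) :
    (setNbhd H (M₁ ∪ M₂)).ncard +
      (((M₁ ∪ setNbhd H M₁) ∩ (M₂ ∪ setNbhd H M₂)) \ (M₁ ∩ M₂)).ncard
      ≤ (setNbhd H M₁).ncard + (setNbhd H M₂).ncard := by
  set N₁ := setNbhd H M₁ with hN₁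
  set N₂ := setNbhd H M₂ with hN₂
  set W := setNbhd H (M₁ ∪ M₂) with hW
  set Y := ((M₁ ∪ N₁) ∩ (M₂ ∪ N₂)) \ (M₁ ∩ M₂) with hY
  have hWN : W ⊆ N₁ ∪ N₂ := by
    rintro v ⟨hv1, u, hu, hadj⟩
    rcases hu with hu | hu
    · exact Or.inl ⟨fun h => hv1 (Or.inl h), u, hu, hadj⟩
    · exact Or.inr ⟨fun h => hv1 (Or.inr h), u, hu, hadj⟩
  have hYN : Y ⊆ N₁ ∪ N₂ := by
    rintro v ⟨⟨hv1, hv2⟩, hv3⟩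
    by_cases h1 : v ∈ M₁
    · rcases hv2 with h | h
      · exact absurd ⟨h1, h⟩ hv3
      · exact Or.inr h
    · rcases hv1 with h | h
      · exact absurd h h1
      · exact Or.inl h
  have hWY : W ∩ Y ⊆ N₁ ∩ N₂ := by
    rintro v ⟨⟨hv1, _⟩, ⟨⟨hva, hvb⟩, _⟩⟩
    constructor
    · rcases hva with h | h
      · exact absurd (Or.inl h) hv1
      · exact h
    · rcases hvb with h | h
      · exact absurd (Or.inr h) hv1
      · exact h
  calc W.ncard + Y.ncard = (W ∪ Y).ncard + (W ∩ Y).ncard :=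
        (Set.ncard_union_add_ncard_inter W Y).symm
    _ ≤ (N₁ ∪ N₂).ncard + (N₁ ∩ N₂).ncard :=
        Nat.add_le_add (Set.ncard_le_ncard (Set.union_subset hWN hYN) (Set.toFinite _))
          (Set.ncard_le_ncard hWY (Set.toFinite _))
    _ = N₁.ncard + N₂.ncard := Set.ncard_union_add_ncard_inter N₁ N₂

lemma union_not_small (hk : 4 ≤ k) (hT : IsTangle H k T) {M₁ M₂ : Set V}
    (h₁ : M₁ ∈ MaxPredongles H T) (h₂ : M₂ ∈ MaxPredongles H T) (hne : M₁ ≠ M₂) :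
    ¬ (setNbhd H (M₁ ∪ M₂)).ncard ≤ 3 := by
  intro h3
  have hmem : (M₁ ∪ M₂ ∪ setNbhd H (M₁ ∪ M₂), (M₁ ∪ M₂)ᶜ) ∈ T := by
    refine T_orient hT (sep_nbhd _) ?_ h₁.1.2 h₂.1.2 ?_
    · rw [nbhd_inter]; omega
    · ext x
      simp only [Set.mem_union, Set.mem_compl_iff, Set.mem_univ, iff_true]
      by_cases h : x ∈ M₁ ∪ M₂
      · rcases h with h | h
        · exact Or.inl (Or.inr (Or.inl h))
        · exact Or.inr (Or.inl h)
      · exact Or.inl (Or.inl h)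
  have hpred : IsPredongle H T (M₁ ∪ M₂) := ⟨h3, hmem⟩
  have e1 : M₁ = M₁ ∪ M₂ := h₁.2 _ hpred Set.subset_union_left
  have e2 : M₂ = M₁ ∪ M₂ := h₂.2 _ hpred Set.subset_union_right
  exact hne (e1.trans e2.symm)

lemma Y_small (hH : ThreeConnected H) (hk : 4 ≤ k) (hT : IsTangle H k T) {M₁ M₂ : Set V}
    (h₁ : M₁ ∈ MaxPredongles H T) (h₂ : M₂ ∈ MaxPredongles H T) (hne : M₁ ≠ M₂) :
    ¬ 3 ≤ (((M₁ ∪ setNbhd H M₁) ∩ (M₂ ∪ setNbhd H M₂)) \ (M₁ ∩ M₂)).ncard := by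
  intro h3
  have h₁' : IsMaxPredongle H T M₁ := h₁
  have h₂' : IsMaxPredongle H T M₂ := h₂
  have hc := counting (H := H) M₁ M₂
  have hn1 : (setNbhd H M₁).ncard ≤ 3 := h₁'.1.1
  have hn2 : (setNbhd H M₂).ncard ≤ 3 := h₂'.1.1
  exact union_not_small hk hT h₁ h₂ hne (by omega)

lemma pair_disjoint (hH : ThreeConnected H) (hk : 4 ≤ k) (hT : IsTangle H k T)
    {M₁ M₂ : Set V} (h₁ : M₁ ∈ MaxPredongles H T) (h₂ : M₂ ∈ MaxPredongles H T)
    (hne : M₁ ≠ M₂) : M₁ ∩ M₂ = ∅ := by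
  by_contra hne2
  obtain ⟨x, hx⟩ := Set.nonempty_iff_ne_empty.mpr hne2
  set Z := (M₁ ∪ setNbhd H M₁) ∩ (M₂ ∪ setNbhd H M₂) with hZ
  have hsep : IsSeparation H Z (M₁ ∩ M₂)ᶜ := by
    constructor
    · ext y
      simp only [Set.mem_union, Set.mem_compl_iff, Set.mem_univ, iff_true]
      by_cases h : y ∈ M₁ ∩ M₂
      · exact Or.inl ⟨Or.inl h.1, Or.inl h.2⟩
      · exact Or.inr h
    · rintro u v hadj ⟨hu1, hu2⟩ ⟨_, hv2⟩
      simp only [Set.mem_compl_iff, not_not] at hu2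
      apply hv2
      constructor
      · by_cases h : v ∈ M₁
        · exact Or.inl h
        · exact Or.inr ⟨h, u, hu2.1, hadj⟩
      · by_cases h : v ∈ M₂
        · exact Or.inl h
        · exact Or.inr ⟨h, u, hu2.2, hadj⟩
  have hZc : Z ∩ (M₁ ∩ M₂)ᶜ = Z \ (M₁ ∩ M₂) := (Set.diff_eq Z (M₁ ∩ M₂)).symm
  obtain ⟨z, hz⟩ := Set.ne_univ_iff_exists_notMem _ |>.mp (fst_ne_univ hT h₁.1.2)
  have h3 : 3 ≤ (Z ∩ (M₁ ∩ M₂)ᶜ).ncard := by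
    apply three_conn_cut hH hsep
    · exact ⟨x, ⟨Or.inl hx.1, Or.inl hx.2⟩, by
        simp only [Set.mem_compl_iff, not_not]; exact hx⟩
    · exact ⟨z, fun h => hz (Or.inl h.1), fun h => hz h.1⟩
  exact Y_small hH hk hT h₁ h₂ hne (hZc ▸ h3)

lemma pair_nbhd_small (hH : ThreeConnected H) (hk : 4 ≤ k) (hT : IsTangle H k T)
    {M₁ M₂ : Set V} (h₁ : M₁ ∈ MaxPredongles H T) (h₂ : M₂ ∈ MaxPredongles H T)
    (hne : M₁ ≠ M₂) : (M₁ ∩ setNbhd H M₂).ncard ≤ 1 := by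
  by_contra hge
  push_neg at hge
  have hd : M₁ ∩ M₂ = ∅ := pair_disjoint hH hk hT h₁ h₂ hne
  -- v ∈ M₁ ∩ N(M₂) exists, giving u ∈ N(M₁) ∩ M₂
  have hvne : (M₁ ∩ setNbhd H M₂).Nonempty := by
    rw [Set.nonempty_iff_ne_empty]
    intro h; rw [h] at hge; simp at hge
  obtain ⟨v, hv1, hv2, u, hu, hadj⟩ := hvne
  have huN : u ∈ setNbhd H M₁ ∩ M₂ := by
    refine ⟨⟨fun h => ?_, v, hv1, hadj.symm⟩, hu⟩
    exact absurd hd (Set.nonempty_iff_ne_empty.mp ⟨u, h, hu⟩)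
  have hsub : (M₁ ∩ setNbhd H M₂) ∪ (setNbhd H M₁ ∩ M₂) ⊆
      ((M₁ ∪ setNbhd H M₁) ∩ (M₂ ∪ setNbhd H M₂)) \ (M₁ ∩ M₂) := by
    intro w hw
    rcases hw with hw | hw
    · exact ⟨⟨Or.inl hw.1, Or.inr hw.2⟩, by simp [hd]⟩
    · exact ⟨⟨Or.inr hw.1, Or.inl hw.2⟩, by simp [hd]⟩
  have hdisj : Disjoint (M₁ ∩ setNbhd H M₂) (setNbhd H M₁ ∩ M₂) :=
    Set.disjoint_left.mpr fun w hw1 hw2 =>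
      absurd hd (Set.nonempty_iff_ne_empty.mp ⟨w, hw1.1, hw2.2⟩)
  have h3 : 3 ≤ (((M₁ ∪ setNbhd H M₁) ∩ (M₂ ∪ setNbhd H M₂)) \ (M₁ ∩ M₂)).ncard := by
    calc (3 : ℕ) ≤ (M₁ ∩ setNbhd H M₂).ncard + (setNbhd H M₁ ∩ M₂).ncard := by
          have : 0 < (setNbhd H M₁ ∩ M₂).ncard :=
            (Set.ncard_pos (Set.toFinite _)).mpr ⟨u, huN⟩
          omega
      _ = ((M₁ ∩ setNbhd H M₂) ∪ (setNbhd H M₁ ∩ M₂)).ncard := by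
          rw [Set.ncard_union_eq hdisj]
      _ ≤ _ := Set.ncard_le_ncard hsub (Set.toFinite _)
  exact Y_small hH hk hT h₁ h₂ hne h3

end Pair
section Main
variable {V : Type*} [Fintype V] {H : SimpleGraph V} {k : ℕ} {T : Set (Set V × Set V)}

lemma family_nbhd_eq_three (hH : ThreeConnected H) (hk : 4 ≤ k) (hT : IsTangle H k T)
    {E : Set V} (hE : E ∈ PredongleFamily H T) : (setNbhd H E).ncard = 3 := by
  obtain ⟨hEne, M, hM, hEeq⟩ := hE
  have hM' : IsMaxPredongle H T M := hM
  set S := MaxPredongles H T \ {M} with hS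
  set U : Set V := ⋃ M' ∈ S, M' with hU
  set NU : Set V := ⋃ M' ∈ S, setNbhd H M' with hNU
  set UN : Set V := ⋃ M' ∈ S, (M' ∪ setNbhd H M') with hUN
  set P : Set V := (M ∪ setNbhd H M) \ U with hP
  set Q : Set V := Mᶜ ∪ UN with hQ
  have hSne : ∀ M' ∈ S, M ≠ M' := fun M' h he => h.2 (by simp [← he])
  have hSdisj : ∀ M' ∈ S, M ∩ M' = ∅ := fun M' h =>
    pair_disjoint hH hk hT hM h.1 (hSne M' h)
  have hmemU : ∀ x, x ∈ U ↔ ∃ M' ∈ S, x ∈ M' := by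
    intro x; simp [hU, Set.mem_iUnion]
  have hmemNU : ∀ x, x ∈ NU ↔ ∃ M' ∈ S, x ∈ setNbhd H M' := by
    intro x; simp [hNU, Set.mem_iUnion]
  have hmemUN : ∀ x, x ∈ UN ↔ ∃ M' ∈ S, x ∈ M' ∪ setNbhd H M' := by
    intro x; simp [hUN, Set.mem_iUnion]
  have hUsub : U ⊆ UN := by
    intro x hx
    obtain ⟨M', hM'S, hxM'⟩ := (hmemU x).mp hx
    exact (hmemUN x).mpr ⟨M', hM'S, Or.inl hxM'⟩
  -- E = P \ Q
  have hEPQ : E = P \ Q := by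
    rw [hEeq]
    ext x
    constructor
    · rintro ⟨hxM, hxUN⟩
      have hxUN' : x ∉ UN := hxUN
      refine ⟨⟨Or.inl hxM, fun h => hxUN' (hUsub h)⟩, ?_⟩
      rintro (h | h)
      · exact h hxM
      · exact hxUN' h
    · rintro ⟨⟨hxMN, hxU⟩, hxQ⟩
      have hxM : x ∈ M := by
        by_contra h
        exact hxQ (Or.inl h)
      exact ⟨hxM, fun h => hxQ (Or.inr h)⟩
  -- (P, Q) is a separation
  have hsepPQ : IsSeparation H P Q := by
    constructor
    · ext x
      simp only [Set.mem_union, Set.mem_univ, iff_true]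
      by_cases hq : x ∈ Q
      · exact Or.inr hq
      · left
        have hxM : x ∈ M := by
          by_contra h
          exact hq (Or.inl h)
        refine ⟨Or.inl hxM, fun h => hq (Or.inr (hUsub h))⟩
    · rintro u v hadj ⟨hu1, hu2⟩ ⟨hv1, hv2⟩
      have huM : u ∈ M := by
        by_contra h
        exact hu2 (Or.inl h)
      have huUN : u ∉ UN := fun h => hu2 (Or.inr h)
      -- v is adjacent to u ∈ M, so v ∈ M ∪ N(M)
      have hvMN : v ∈ M ∪ setNbhd H M := by
        by_cases h : v ∈ M
        · exact Or.inl h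
        · exact Or.inr ⟨h, u, huM, hadj⟩
      -- v ∉ P means v ∈ U
      have hvU : v ∈ U := by
        by_contra h
        exact hv2 ⟨hvMN, h⟩
      obtain ⟨M', hM'S, hvM'⟩ := (hmemU v).mp hvU
      have huM' : u ∉ M' := fun h =>
        absurd (hSdisj M' hM'S) (Set.nonempty_iff_ne_empty.mp ⟨u, huM, h⟩)
      exact huUN ((hmemUN u).mpr ⟨M', hM'S, Or.inr ⟨huM', v, hvM', hadj.symm⟩⟩)
  -- N(E) ⊆ P ∩ Q
  have hNEPQ : setNbhd H E ⊆ P ∩ Q := by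
    rintro w ⟨hw1, e, he, hadj⟩
    have hePQ : e ∈ P \ Q := hEPQ ▸ he
    have hwP : w ∈ P := by
      by_cases h : w ∈ P
      · exact h
      · exfalso
        have hPU : P ∪ Q = Set.univ := hsepPQ.1
        have hm : w ∈ P ∪ Q := by rw [hPU]; trivial
        have hwQ : w ∈ Q := by
          rcases hm with h' | h'
          · exact absurd h' h
          · exact h'
        exact hsepPQ.2 hadj hePQ ⟨hwQ, h⟩
    have hwQ : w ∈ Q := by
      by_contra h
      exact hw1 (hEPQ ▸ (⟨hwP, h⟩ : w ∈ P \ Q))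
    exact ⟨hwP, hwQ⟩
  -- |P ∩ Q| ≤ 3
  have hPQsub : P ∩ Q ⊆ (setNbhd H M \ U) ∪ (M ∩ NU) := by
    rintro x ⟨⟨hxMN, hxU⟩, hxQ⟩
    rcases hxMN with hxM | hxN
    · right
      refine ⟨hxM, ?_⟩
      rcases hxQ with h | h
      · exact absurd hxM h
      · obtain ⟨M', hM'S, hxM'⟩ := (hmemUN x).mp h
        rcases hxM' with h' | h'
        · exact absurd ((hmemU x).mpr ⟨M', hM'S, h'⟩) hxU
        · exact (hmemNU x).mpr ⟨M', hM'S, h'⟩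
    · exact Or.inl ⟨hxN, hxU⟩
  -- injection from M ∩ NU into setNbhd H M ∩ U
  have hinj : (M ∩ NU).ncard ≤ (setNbhd H M ∩ U).ncard := by
    classical
    set f : V → V := fun v => if h : ∃ u, u ∈ U ∧ H.Adj u v then h.choose else v with hf
    have hfspec : ∀ v ∈ M ∩ NU, f v ∈ U ∧ H.Adj (f v) v := by
      rintro v ⟨hvM, hvNU⟩
      obtain ⟨M', hM'S, hvM'⟩ := (hmemNU v).mp hvNU
      obtain ⟨_, u, huM', hadj⟩ := hvM'
      have hex : ∃ u, u ∈ U ∧ H.Adj u v := ⟨u, (hmemU u).mpr ⟨M', hM'S, huM'⟩, hadj⟩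
      simp only [hf, dif_pos hex]
      exact hex.choose_spec
    apply Set.ncard_le_ncard_of_injOn f
    · rintro v hv
      obtain ⟨hfU, hfadj⟩ := hfspec v hv
      obtain ⟨M', hM'S, hfM'⟩ := (hmemU (f v)).mp hfU
      have hfnM : f v ∉ M := fun h =>
        absurd (hSdisj M' hM'S) (Set.nonempty_iff_ne_empty.mp ⟨f v, h, hfM'⟩)
      exact ⟨⟨hfnM, v, hv.1, hfadj.symm⟩, hfU⟩
    · rintro v₁ hv₁ v₂ hv₂ heq
      obtain ⟨hfU₁, hfadj₁⟩ := hfspec v₁ hv₁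
      obtain ⟨hfU₂, hfadj₂⟩ := hfspec v₂ hv₂
      rw [heq] at hfU₁ hfadj₁
      obtain ⟨M', hM'S, hfM'⟩ := (hmemU (f v₂)).mp hfU₂
      have hsmall := pair_nbhd_small hH hk hT hM hM'S.1 (hSne M' hM'S)
      have hmem : ∀ v, v ∈ M ∩ NU → H.Adj (f v₂) v → v ∈ M ∩ setNbhd H M' := by
        rintro v ⟨hvM, _⟩ hadj
        have hvnM' : v ∉ M' := fun h =>
          absurd (hSdisj M' hM'S) (Set.nonempty_iff_ne_empty.mp ⟨v, hvM, h⟩)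
        exact ⟨hvM, hvnM', f v₂, hfM', hadj⟩
      have h1 := hmem v₁ hv₁ hfadj₁
      have h2 := hmem v₂ hv₂ hfadj₂
      exact (Set.ncard_le_one (Set.toFinite _)).mp hsmall v₁ h1 v₂ h2
  have hPQ3 : (P ∩ Q).ncard ≤ 3 := by
    have hNM3 : (setNbhd H M).ncard ≤ 3 := hM'.1.1
    calc (P ∩ Q).ncard ≤ ((setNbhd H M \ U) ∪ (M ∩ NU)).ncard :=
          Set.ncard_le_ncard hPQsub (Set.toFinite _)
      _ ≤ (setNbhd H M \ U).ncard + (M ∩ NU).ncard := Set.ncard_union_le _ _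
      _ ≤ (setNbhd H M \ U).ncard + (setNbhd H M ∩ U).ncard := by omega
      _ = (setNbhd H M).ncard := by
          rw [add_comm, Set.ncard_inter_add_ncard_diff_eq_ncard]
      _ ≤ 3 := hNM3
  have hub : (setNbhd H E).ncard ≤ 3 :=
    le_trans (Set.ncard_le_ncard hNEPQ (Set.toFinite _)) hPQ3
  -- lower bound via 3-connectivity
  have hlb : 3 ≤ (setNbhd H E).ncard := by
    obtain ⟨x, hx⟩ := Set.nonempty_iff_ne_empty.mpr hEne
    obtain ⟨z, hz⟩ := Set.ne_univ_iff_exists_notMem _ |>.mp (fst_ne_univ hT hM'.1.2)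
    have hEM : E ⊆ M := by rw [hEeq]; exact Set.diff_subset
    have h := three_conn_cut hH (sep_nbhd (H := H) E) ?_ ?_
    · rwa [nbhd_inter] at h
    · exact ⟨x, Or.inl hx, by simp only [Set.mem_compl_iff, not_not]; exact hx⟩
    · refine ⟨z, fun h => hz (Or.inl (hEM h)), fun h => ?_⟩
      rcases h with h | h
      · exact hz (Or.inl (hEM h))
      · obtain ⟨_, e, he, hadj⟩ := h
        exact hz (Or.inr ⟨fun hzM => hz (Or.inl hzM), e, hEM he, hadj⟩)
  omega

end Main

/-- The elements of `𝒟(H,T)` are pairwise disjoint and nonadjacent, and each yields a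
separation `(N[D], V(H) ∖ D)` of order exactly 3. -/
theorem predongleFamily_properties {V : Type*} [Fintype V] (H : SimpleGraph V)
    (hH : ThreeConnected H) (k : ℕ) (hk : 4 ≤ k) (T : Set (Set V × Set V))
    (hT : IsTangle H k T) :
    (∀ D₁ ∈ PredongleFamily H T, ∀ D₂ ∈ PredongleFamily H T, D₁ ≠ D₂ →
      D₁ ∩ D₂ = ∅ ∧ ∀ u ∈ D₁, ∀ v ∈ D₂, ¬ H.Adj u v) ∧
    (∀ D ∈ PredongleFamily H T,
      IsSeparation H (D ∪ setNbhd H D) Dᶜ ∧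
        ((D ∪ setNbhd H D) ∩ Dᶜ).ncard = 3) := by
  constructor
  · intro D₁ hD₁ D₂ hD₂ hne
    obtain ⟨h1ne, M₁, hM₁, e₁⟩ := hD₁
    obtain ⟨h2ne, M₂, hM₂, e₂⟩ := hD₂
    have hMne : M₁ ≠ M₂ := by
      rintro rfl
      exact hne (e₁.trans e₂.symm)
    have hD₁sub : ∀ x ∈ D₁, x ∈ M₁ ∧ x ∉ M₂ ∪ setNbhd H M₂ := by
      intro x hx
      rw [e₁] at hx
      obtain ⟨hxM, hxU⟩ := hx
      refine ⟨hxM, fun h => hxU ?_⟩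
      exact Set.mem_biUnion ⟨hM₂, fun hmem => hMne (Set.mem_singleton_iff.mp hmem).symm⟩ h
    have hD₂M : D₂ ⊆ M₂ := by rw [e₂]; exact Set.diff_subset
    constructor
    · ext x
      simp only [Set.mem_inter_iff, Set.mem_empty_iff_false, iff_false, not_and]
      intro hx1 hx2
      exact (hD₁sub x hx1).2 (Or.inl (hD₂M hx2))
    · intro u hu v hv hadj
      have h := (hD₁sub u hu).2
      by_cases hM : u ∈ M₂
      · exact h (Or.inl hM)
      · exact h (Or.inr ⟨hM, v, hD₂M hv, hadj.symm⟩)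
  · intro D hD
    refine ⟨sep_nbhd D, ?_⟩
    rw [nbhd_inter]
    exact family_nbhd_eq_three hH hk hT hD
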